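/- arXiv:2306.05315 — 4 statements merged into one kernel-verified Lean document; each statement's English description precedes it below -/
import Mathlib

section
/- Let m ∈ ℕ, α, β ∈ (0,1), and let t = (t_1, …, t_m) be a vector whose entries are pairwise distinct and lie in the open interval (0,1). With r = r(t, α), a = a(t, β) and cutoffs t^l, t^u as defined, one has r + a ≥ m if and only if t^l > t^u. Moreover, for an arbitrary vector t ∈ [0,1]^m (possibly with ties), t^l > t^u implies r + a ≥ m. -/
open MeasureTheory Filter

/-- Order statistics of a finite tuple: the `i`-th smallest value (0-indexed). -/
noncomputable def ordStat {m : ℕ} (t : Fin m → ℝ) : Fin m → ℝ :=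
  t ∘ Tuple.sort t

/-- Cumulative average of the `q` smallest values, `(1/q) * ∑_{l=1}^q t^{(l)}`. -/
noncomputable def cumAvgLow {m : ℕ} (t : Fin m → ℝ) (q : ℕ) : ℝ :=
  (∑ i : Fin m, if (i : ℕ) < q then ordStat t i else 0) / q

/-- Cumulative average of `1 - (value)` over the `q` largest values,
`(1/q) * ∑_{l=1}^q (1 - t^{(m-l+1)})`. -/
noncomputable def cumAvgHigh {m : ℕ} (t : Fin m → ℝ) (q : ℕ) : ℝ :=
  (∑ i : Fin m, if m - q ≤ (i : ℕ) then 1 - ordStat t i else 0) / q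

/-- `r(t, α) = max {q ∈ {1,…,m} : (1/q) ∑_{l=1}^q t^{(l)} ≤ α}`, `0` if no such `q`. -/
noncomputable def rIdx {m : ℕ} (t : Fin m → ℝ) (α : ℝ) : ℕ :=
  sSup {q : ℕ | 1 ≤ q ∧ q ≤ m ∧ cumAvgLow t q ≤ α}

/-- `a(t, β) = max {q ∈ {1,…,m} : (1/q) ∑_{l=1}^q (1 - t^{(m-l+1)}) ≤ β}`, `0` if no such `q`. -/
noncomputable def aIdx {m : ℕ} (t : Fin m → ℝ) (β : ℝ) : ℕ :=
  sSup {q : ℕ | 1 ≤ q ∧ q ≤ m ∧ cumAvgHigh t q ≤ β}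

/-- Adaptive lower cutoff `t^l`: `t^{(r+1)}` if `r < m`, and `1` if `r = m`. -/
noncomputable def lowerCut {m : ℕ} (t : Fin m → ℝ) (α : ℝ) : ℝ :=
  if h : rIdx t α < m then ordStat t ⟨rIdx t α, h⟩ else 1

/-- Adaptive upper cutoff `t^u`: `t^{(m-a)}` if `a < m`, and `0` if `a = m`. -/
noncomputable def upperCut {m : ℕ} (t : Fin m → ℝ) (β : ℝ) : ℝ :=
  if h : aIdx t β < m then ordStat t ⟨m - 1 - aIdx t β, by omega⟩ else 0

/-- The `k`-th order statistic with 1-based index `k` (junk value `1` out of range). -/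
noncomputable def ordStatN {m : ℕ} (t : Fin m → ℝ) (k : ℕ) : ℝ :=
  if h : k - 1 < m then ordStat t ⟨k - 1, h⟩ else 1

/-- Empirical running-average functional `Q(u)` (equal to `0` below `t^{(1)}`,
using the convention `0/0 = 0`). -/
noncomputable def Qlow {m : ℕ} (t : Fin m → ℝ) (u : ℝ) : ℝ :=
  (∑ j : Fin m, if t j ≤ u then t j else 0) / (∑ j : Fin m, if t j ≤ u then (1:ℝ) else 0)

/-- Empirical running-average functional `Q'(u)` (equal to `0` above `t^{(m)}`,
using the convention `0/0 = 0`). -/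
noncomputable def Qhigh {m : ℕ} (t : Fin m → ℝ) (u : ℝ) : ℝ :=
  (∑ j : Fin m, if u ≤ t j then 1 - t j else 0) / (∑ j : Fin m, if u ≤ t j then (1:ℝ) else 0)

lemma ordStat_monotone {m : ℕ} (t : Fin m → ℝ) : Monotone (ordStat t) :=
  Tuple.monotone_sort t

lemma ordStat_strictMono {m : ℕ} (t : Fin m → ℝ) (hinj : Function.Injective t) :
    StrictMono (ordStat t) :=
  (ordStat_monotone t).strictMono_of_injective
    (hinj.comp (Tuple.sort t).injective)

lemma ordStat_mem {m : ℕ} (t : Fin m → ℝ) (i : Fin m) (S : Set ℝ)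
    (ht : ∀ i, t i ∈ S) : ordStat t i ∈ S := ht _

/-- **Lemma 1.** For pairwise-distinct values in `(0,1)`, `r + a ≥ m` iff `t^l > t^u`;
and for an arbitrary vector in `[0,1]^m`, `t^l > t^u` implies `r + a ≥ m`. -/
theorem stmt_0 {m : ℕ} (α β : ℝ) (hα : α ∈ Set.Ioo (0:ℝ) 1) (hβ : β ∈ Set.Ioo (0:ℝ) 1)
    (t : Fin m → ℝ) (hinj : Function.Injective t)
    (ht : ∀ i, t i ∈ Set.Ioo (0:ℝ) 1) :
    (m ≤ rIdx t α + aIdx t β ↔ upperCut t β < lowerCut t α) ∧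
    ∀ s : Fin m → ℝ, (∀ i, s i ∈ Set.Icc (0:ℝ) 1) →
      upperCut s β < lowerCut s α → m ≤ rIdx s α + aIdx s β := by
  constructor
  · by_cases hr : rIdx t α < m
    · by_cases ha : aIdx t β < m
      · rw [lowerCut, upperCut, dif_pos hr, dif_pos ha,
          (ordStat_strictMono t hinj).lt_iff_lt, Fin.mk_lt_mk]
        omega
      · refine iff_of_true (by omega) ?_
        rw [lowerCut, upperCut, dif_pos hr, dif_neg ha]
        exact (ordStat_mem t _ _ ht).1
    · refine iff_of_true (by omega) ?_
      rw [lowerCut, dif_neg hr, upperCut]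
      split
      · exact (ordStat_mem t _ _ ht).2
      · norm_num
  · intro s hs hlt
    by_cases hr : rIdx s α < m
    · by_cases ha : aIdx s β < m
      · rw [lowerCut, upperCut, dif_pos hr, dif_pos ha] at hlt
        by_contra h
        exact absurd (ordStat_monotone s (by simp [Fin.le_def]; omega :
          (⟨rIdx s α, hr⟩ : Fin m) ≤ ⟨m - 1 - aIdx s β, by omega⟩)) (not_le.2 hlt)
      · omega
    · omega
end

section
/- Under the sequential model with Assumption 1, fix α, β ∈ (0,1) and m ∈ ℕ. For each n define r_n = r((t_n^1, …, t_n^m), α) and a_n = a((t_n^1, …, t_n^m), β), and define the oracle stopping time τ = inf{n ∈ ℕ : r_n + a_n ≥ m}. Then P(τ < ∞) = 1. -/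
open MeasureTheory Filter

/-!
Take `ε = min α β`. By Assumption 1, the probability that at time `n` some `t_n^i` is farther
than `ε` from `1 - θ_i` tends to `0`. Off that event the sorted values split into the `k` values
`≤ ε`, whose running mean is `≤ α`, and the other `m - k` values `≥ 1 - ε`, whose running mean of
`1 - t` is `≤ β`; hence `r_n ≥ k` and `a_n ≥ m - k`. So `{τ = ∞}` lies in events of arbitrarily
small probability.
-/

open Finset

lemma Fin.card_filter_sub_le_val {m q : ℕ} (hq : q ≤ m) : #{j : Fin m | m - q ≤ (j : ℕ)} = q := by
  have h := card_filter_add_card_filter_not (s := univ) (fun j : Fin m => (j : ℕ) < m - q)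
  simp only [not_lt, card_univ, Fintype.card_fin, Fin.card_filter_val_lt] at h
  omega

section OrderStatistics

variable {m : ℕ} (t : Fin m → ℝ) {q : ℕ} {c : ℝ}

lemma cumAvgLow_le (hq : 0 < q) (hqm : q ≤ m) (h : ∀ j : Fin m, (j : ℕ) < q → ordStat t j ≤ c) :
    cumAvgLow t q ≤ c := by
  rw [cumAvgLow, div_le_iff₀ (by positivity), ← sum_filter]
  calc _ ≤ #{j : Fin m | (j : ℕ) < q} • c :=
        sum_le_card_nsmul _ _ _ (by simpa using h)
    _ = c * q := by rw [Fin.card_filter_val_lt, min_eq_right hqm, nsmul_eq_mul, mul_comm]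

lemma cumAvgHigh_le (hq : 0 < q) (hqm : q ≤ m)
    (h : ∀ j : Fin m, m - q ≤ (j : ℕ) → 1 - c ≤ ordStat t j) :
    cumAvgHigh t q ≤ c := by
  rw [cumAvgHigh, div_le_iff₀ (by positivity), ← sum_filter]
  calc _ ≤ #{j : Fin m | m - q ≤ (j : ℕ)} • c :=
        sum_le_card_nsmul _ _ _ fun j hj => by
          linarith [h j (mem_filter.mp hj).2]
    _ = c * q := by rw [Fin.card_filter_sub_le_val hqm, nsmul_eq_mul, mul_comm]

lemma le_rIdx {α : ℝ} (hq : 0 < q) (hqm : q ≤ m) (h : cumAvgLow t q ≤ α) : q ≤ rIdx t α :=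
  le_csSup ⟨m, fun _ hp => hp.2.1⟩ ⟨hq, hqm, h⟩

lemma le_aIdx {β : ℝ} (hq : 0 < q) (hqm : q ≤ m) (h : cumAvgHigh t q ≤ β) : q ≤ aIdx t β :=
  le_csSup ⟨m, fun _ hp => hp.2.1⟩ ⟨hq, hqm, h⟩

theorem le_rIdx_add_aIdx_of_forall_le_or_le {α β ε : ℝ} (hεα : ε ≤ α) (hεβ : ε ≤ β)
    (h : ∀ i, t i ≤ ε ∨ 1 - ε ≤ t i) : m ≤ rIdx t α + aIdx t β := by
  set k := #{j | ordStat t j ≤ ε}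
  have hkm : k ≤ m := (card_le_univ _).trans_eq (Fintype.card_fin m)
  have hlow (j : Fin m) : (j : ℕ) < k ↔ ordStat t j ≤ ε :=
    Tuple.lt_card_le_iff_apply_le_of_monotone (Tuple.monotone_sort t)
  have hhigh (j : Fin m) (hj : k ≤ (j : ℕ)) : 1 - ε ≤ ordStat t j :=
    (h _).resolve_left fun hle => absurd ((hlow j).mpr hle) (not_lt.mpr hj)
  have hr : k ≤ rIdx t α := by
    rcases Nat.eq_zero_or_pos k with hk | hk
    · omega
    exact le_rIdx t hk hkm ((cumAvgLow_le t hk hkm fun j hj => (hlow j).mp hj).trans hεα)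
  have ha : m - k ≤ aIdx t β := by
    rcases Nat.eq_zero_or_pos (m - k) with hk | hk
    · omega
    refine le_aIdx t hk (Nat.sub_le m k) ((cumAvgHigh_le t hk (Nat.sub_le m k) ?_).trans hεβ)
    exact fun j hj => hhigh j (by omega)
  omega

end OrderStatistics

section Measure

variable {Ω ι : Type*} [MeasurableSpace Ω] {μ : Measure Ω}

lemma tendsto_measure_union_zero {s s' : ℕ → Set Ω}
    (hs : Tendsto (fun n => μ (s n)) atTop (nhds 0))
    (hs' : Tendsto (fun n => μ (s' n)) atTop (nhds 0)) :
    Tendsto (fun n => μ (s n ∪ s' n)) atTop (nhds 0) :=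
  tendsto_of_tendsto_of_tendsto_of_le_of_le tendsto_const_nhds (by simpa using hs.add hs')
    (fun _ => zero_le) fun _ => measure_union_le _ _

lemma tendsto_measure_iUnion_zero [Fintype ι] {s : ℕ → ι → Set Ω}
    (hs : ∀ i, Tendsto (fun n => μ (s n i)) atTop (nhds 0)) :
    Tendsto (fun n => μ (⋃ i, s n i)) atTop (nhds 0) :=
  tendsto_of_tendsto_of_tendsto_of_le_of_le tendsto_const_nhds
    (by simpa using tendsto_finsetSum univ fun i _ => hs i)
    (fun _ => zero_le) fun _ => measure_iUnion_fintype_le μ _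

lemma measure_eq_one_of_compl_subset [IsProbabilityMeasure μ] {G : Set Ω} {s : ℕ → Set Ω}
    (hG : ∀ n, Gᶜ ⊆ s n) (hs : Tendsto (fun n => μ (s n)) atTop (nhds 0)) : μ G = 1 := by
  have hnull : μ Gᶜ = 0 :=
    le_antisymm (ge_of_tendsto' hs fun n => measure_mono (hG n)) zero_le
  rw [measure_of_measure_compl_eq_zero hnull, measure_univ]

end Measure

theorem stmt_4_general {Ω : Type*} {F : MeasurableSpace Ω} {μ : Measure Ω} [IsProbabilityMeasure μ]
    {m : ℕ} (θ : Fin m → Ω → ℝ)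
    (hθ01 : ∀ i ω, θ i ω = 0 ∨ θ i ω = 1)
    (t : ℕ → Fin m → Ω → ℝ)
    (hasm1a : ∀ i, ∀ ε > (0:ℝ),
      Tendsto (fun n => μ {ω | θ i ω = 0 ∧ t n i ω < 1 - ε}) atTop (nhds 0))
    (hasm1b : ∀ i, ∀ ε > (0:ℝ),
      Tendsto (fun n => μ {ω | θ i ω = 1 ∧ ε < t n i ω}) atTop (nhds 0))
    (α β : ℝ) (hα : α ∈ Set.Ioo (0:ℝ) 1) (hβ : β ∈ Set.Ioo (0:ℝ) 1) :
    μ {ω | ∃ n, m ≤ rIdx (fun i => t n i ω) α + aIdx (fun i => t n i ω) β} = 1 := by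
  set ε := min α β
  have hε : 0 < ε := lt_min hα.1 hβ.1
  refine measure_eq_one_of_compl_subset
    (s := fun n => ⋃ i, {ω | θ i ω = 0 ∧ t n i ω < 1 - ε} ∪ {ω | θ i ω = 1 ∧ ε < t n i ω})
    (fun n ω hω => ?_)
    (tendsto_measure_iUnion_zero fun i =>
      tendsto_measure_union_zero (hasm1a i ε hε) (hasm1b i ε hε))
  by_contra hbad
  simp only [Set.mem_iUnion, Set.mem_union, Set.mem_ofPred_eq, not_exists, not_or, not_and,
    not_lt] at hbad
  refine hω ⟨n, le_rIdx_add_aIdx_of_forall_le_or_le _ (min_le_left α β) (min_le_right α β)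
    fun i => ?_⟩
  rcases hθ01 i ω with h0 | h1
  · exact Or.inr ((hbad i).1 h0)
  · exact Or.inl ((hbad i).2 h1)

/-- **Theorem 1, first assertion.** Under Assumption 1, the oracle stopping time
`τ = inf{n : r_n + a_n ≥ m}` is almost surely finite. -/
theorem stmt_4 {Ω : Type*} {F : MeasurableSpace Ω} {μ : Measure Ω} [IsProbabilityMeasure μ]
    (σa : ℕ → MeasurableSpace Ω) (hσmono : Monotone σa) (hσle : ∀ n, σa n ≤ F)
    {m : ℕ} (θ : Fin m → Ω → ℝ) (hθmeas : ∀ i, Measurable (θ i))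
    (hθ01 : ∀ i ω, θ i ω = 0 ∨ θ i ω = 1)
    (t : ℕ → Fin m → Ω → ℝ)
    (ht01 : ∀ n i ω, t n i ω ∈ Set.Icc (0:ℝ) 1)
    (htmeas : ∀ n i, Measurable[σa n] (t n i))
    (hver : ∀ n i, t n i =ᵐ[μ] μ[fun ω => 1 - θ i ω|σa n])
    (hasm1a : ∀ i, ∀ ε > (0:ℝ),
      Tendsto (fun n => μ {ω | θ i ω = 0 ∧ t n i ω < 1 - ε}) atTop (nhds 0))
    (hasm1b : ∀ i, ∀ ε > (0:ℝ),
      Tendsto (fun n => μ {ω | θ i ω = 1 ∧ ε < t n i ω}) atTop (nhds 0))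
    (α β : ℝ) (hα : α ∈ Set.Ioo (0:ℝ) 1) (hβ : β ∈ Set.Ioo (0:ℝ) 1) :
    μ {ω | ∃ n, m ≤ rIdx (fun i => t n i ω) α + aIdx (fun i => t n i ω) β} = 1 :=
  stmt_4_general (F := F) θ hθ01 t hasm1a hasm1b α β hα hβ
end

section
/- Let t = (t_1, …, t_m) ∈ [0,1]^m with order statistics t^{(1)} ≤ ⋯ ≤ t^{(m)}, and let Q' : [0,1] → [0,1] be defined by Q'(u) = (∑_{j=1}^m 1{t_j ≥ u}(1 − t_j))/(∑_{j=1}^m 1{t_j ≥ u}) for u ∈ [0, t^{(m)}] and Q'(u) = 0 for u ∈ (t^{(m)}, 1]. Then: (1) Q' is constant on [0, t^{(1)}], on each interval (t^{(m−r)}, t^{(m−r+1)}] for r = 1, …, m−1, and on (t^{(m)}, 1]; (2) Q' is left-continuous on (0,1); (3) Q' is non-increasing on [0,1]. -/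
open MeasureTheory Filter

/-!
`Q'(u)` depends on `u` only through the index set `{j | u ≤ t j}`, which stays the same as long
as `u` does not cross one of the `t j` upwards. Hence `Q'` is constant between consecutive order
statistics, and left-continuous because `{j | w ≤ t j} = {j | u ≤ t j}` for `w < u` close to `u`.
Raising the level from `u` to `v` discards the values `t j ∈ [u, v)`, whose terms `1 - t j`
exceed `1 - v`, while every remaining term is at most `1 - v`; so the average cannot increase.
-/

open Topology Finset

theorem Finset.sum_div_card_le_sum_div_card_of_subset {ι K : Type*} [DecidableEq ι] [Field K]
    [LinearOrder K] [IsStrictOrderedRing K] {s s' : Finset ι} {f : ι → K} {c : K} (hss : s ⊆ s')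
    (hc : 0 ≤ c) (hs : ∀ i ∈ s, f i ≤ c) (hs' : ∀ i ∈ s' \ s, c ≤ f i) :
    (∑ i ∈ s, f i) / #s ≤ (∑ i ∈ s', f i) / #s' := by
  rw [← sum_sdiff hss, ← card_sdiff_add_card_eq_card hss, Nat.cast_add]
  have hsum : ∑ i ∈ s, f i ≤ #s * c := by simpa using sum_le_card_nsmul s f c hs
  have hsum' : #(s' \ s) * c ≤ ∑ i ∈ s' \ s, f i := by
    simpa using card_nsmul_le_sum (s' \ s) f c hs'
  rcases s.eq_empty_or_nonempty with rfl | hne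
  · simp only [sum_empty, card_empty, Nat.cast_zero, div_zero, add_zero]
    exact div_nonneg (le_trans (by positivity) hsum') (by positivity)
  · have hn : (0 : K) < #s := by exact_mod_cast hne.card_pos
    rw [div_le_div_iff₀ hn (by positivity)]
    nlinarith

section ordStat

variable {m : ℕ} (t : Fin m → ℝ)

theorem monotone_ordStat : Monotone (ordStat t) :=
  Tuple.monotone_sort t

theorem exists_ordStat_eq (j : Fin m) : ∃ k, ordStat t k = t j :=
  ⟨(Tuple.sort t)⁻¹ j, by simp [ordStat]⟩

theorem ordStat_zero_le (h : 0 < m) (j : Fin m) : ordStat t ⟨0, h⟩ ≤ t j := by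
  obtain ⟨k, hk⟩ := exists_ordStat_eq t j
  rw [← hk]
  exact monotone_ordStat t (Fin.le_def.2 (Nat.zero_le k))

theorem le_ordStat_last (h : m - 1 < m) (j : Fin m) : t j ≤ ordStat t ⟨m - 1, h⟩ := by
  obtain ⟨k, hk⟩ := exists_ordStat_eq t j
  rw [← hk]
  exact monotone_ordStat t (Fin.le_def.2 (by dsimp; omega))

theorem le_ordStat_or_ordStat_le {i i' : Fin m} (h : (i : ℕ) + 1 = i') (j : Fin m) :
    t j ≤ ordStat t i ∨ ordStat t i' ≤ t j := by
  obtain ⟨k, hk⟩ := exists_ordStat_eq t j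
  rw [← hk]
  rcases le_or_gt k i with hk | hk
  · exact Or.inl (monotone_ordStat t hk)
  · exact Or.inr (monotone_ordStat t (Fin.le_def.2 (by omega)))

end ordStat

section Qhigh

variable {m : ℕ} (t : Fin m → ℝ)

theorem Qhigh_eq_sum_div_card (u : ℝ) :
    Qhigh t u = (∑ j ∈ {j | u ≤ t j}, (1 - t j)) / #{j | u ≤ t j} := by
  rw [Qhigh, sum_filter, sum_boole]

theorem Qhigh_eq_of_forall_lt_or_le {u v : ℝ} (huv : u ≤ v) (h : ∀ j, t j < u ∨ v ≤ t j) :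
    Qhigh t u = Qhigh t v := by
  have hiff (j : Fin m) : u ≤ t j ↔ v ≤ t j :=
    ⟨fun hu => (h j).resolve_left hu.not_gt, huv.trans⟩
  simp only [Qhigh, hiff]

theorem eventually_Qhigh_eq (u : ℝ) : ∀ᶠ w in 𝓝[≤] u, Qhigh t w = Qhigh t u := by
  have hnear (j : Fin m) : ∀ᶠ w in 𝓝[≤] u, t j < w ∨ u ≤ t j := by
    rcases lt_or_ge (t j) u with h | h
    · filter_upwards [Ioc_mem_nhdsLE h] with w hw using Or.inl hw.1
    · exact Eventually.of_forall fun _ => Or.inr h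
  filter_upwards [self_mem_nhdsWithin, eventually_all.2 hnear] with w hwu hw
  exact Qhigh_eq_of_forall_lt_or_le t hwu hw

theorem continuousWithinAt_Qhigh_Iic (u : ℝ) : ContinuousWithinAt (Qhigh t) (Set.Iic u) u :=
  continuousWithinAt_const.congr_of_eventuallyEq (eventually_Qhigh_eq t u) rfl

theorem antitoneOn_Qhigh : AntitoneOn (Qhigh t) (Set.Iic 1) := by
  intro u _ v hv huv
  rw [Qhigh_eq_sum_div_card, Qhigh_eq_sum_div_card]
  refine sum_div_card_le_sum_div_card_of_subset (c := 1 - v) ?_ (sub_nonneg.2 hv) ?_ ?_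
  · exact monotone_filter_right _ fun j _ hj => huv.trans hj
  · intro j hj
    linarith [(mem_filter.1 hj).2]
  · intro j hj
    simp only [Finset.mem_sdiff, mem_filter, mem_univ, true_and, not_le] at hj
    linarith [hj.2]

end Qhigh

/-- **Lemma 10.** Properties of the empirical running-average functional `Q'`:
(1) `Q'` is constant on `[0, t^{(1)}]`, on each `(t^{(m−r)}, t^{(m−r+1)}]` and on
`(t^{(m)}, 1]`; (2) `Q'` is left-continuous on `(0,1)`; (3) `Q'` is non-increasing
on `[0,1]`. -/
theorem stmt_10 {m : ℕ} (hm : 1 ≤ m) (t : Fin m → ℝ) :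
    ((∀ u v : ℝ, 0 ≤ u → u ≤ v → v ≤ ordStat t ⟨0, by omega⟩ → Qhigh t u = Qhigh t v) ∧
     (∀ r : ℕ, ∀ _hr1 : 1 ≤ r, ∀ _hr2 : r ≤ m - 1, ∀ u v : ℝ,
        ordStat t ⟨m - r - 1, by omega⟩ < u → u ≤ v → v ≤ ordStat t ⟨m - r, by omega⟩ →
        Qhigh t u = Qhigh t v) ∧
     (∀ u v : ℝ, ordStat t ⟨m - 1, by omega⟩ < u → u ≤ v → v ≤ 1 →
        Qhigh t u = Qhigh t v)) ∧
    (∀ u ∈ Set.Ioo (0:ℝ) 1, ContinuousWithinAt (Qhigh t) (Set.Iic u) u) ∧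
    AntitoneOn (Qhigh t) (Set.Icc (0:ℝ) 1) := by
  refine ⟨⟨fun u v _ huv hv => ?_, fun r _ _ u v hu huv hv => ?_, fun u v hu huv _ => ?_⟩,
    fun u _ => continuousWithinAt_Qhigh_Iic t u,
    (antitoneOn_Qhigh t).mono Set.Icc_subset_Iic_self⟩
  · exact Qhigh_eq_of_forall_lt_or_le t huv fun j => Or.inr (hv.trans (ordStat_zero_le t _ j))
  · refine Qhigh_eq_of_forall_lt_or_le t huv fun j => ?_
    exact (le_ordStat_or_ordStat_le t (by dsimp; omega) j).imp (·.trans_lt hu) hv.trans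
  · exact Qhigh_eq_of_forall_lt_or_le t huv fun j => Or.inl ((le_ordStat_last t _ j).trans_lt hu)
end

section
/- In the infinite-array two-group model, fix α, β ∈ (0,1) and a stage n, and suppose the log-likelihood ratio statistics Λ_n^j = log(f_{1n}(S_n^j)/f_{0n}(S_n^j)), j = 1, …, m, are (unconditionally) i.i.d. with a cdf H_n that is continuous and strictly increasing in a neighborhood of its quantile of order 1 − π_1, where π_1 = 1 − π_0. Let K_m = ∑_{j=1}^m θ_j, let Λ_n^{(1)} ≥ ⋯ ≥ Λ_n^{(m)} be the descending order statistics of (Λ_n^1, …, Λ_n^m), and define the Gap-rule stopping time T_g* = inf{n ∈ ℕ : Λ_n^{(K_m)} − Λ_n^{(K_m+1)} ≥ log(K_m(m−K_m)/min(α,β))}, with the defining inequality regarded as failing when K_m ∈ {0, m} and T_g* = ∞ if the inequality never holds. Then for every L ∈ ℕ, lim_{m→∞} P(T_g* ≤ L) = 0. -/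
/-!
The Gap threshold `log (K_m (m - K_m) / min α β)` is at least `log (m - 1) → ∞`, while at a fixed
stage `n` one can choose levels `l < u` with `P(Λ_n > u) < π₁` and `P(Λ_n < l) < π₀`. Once the
threshold exceeds `u - l`, a large enough gap forces either at least `K_m` statistics above `u` or
at least `m - K_m` below `l`. By the strong law of large numbers these counts, divided by `m`,
converge to limits strictly below those of `K_m / m → π₁` and `(m - K_m) / m → π₀`, so for each
stage the probability vanishes, and a union bound over `n ≤ L` concludes.
-/

open MeasureTheory Filter

open ProbabilityTheory

/-- The Gap-rule condition at a given stage: for the vector `v` of log-likelihood ratios of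
the `m` streams and `K` true alternatives, the gap between the `K`-th and `(K+1)`-th largest
values is at least `c`. It is regarded as failing when `K ∈ {0, m}`. -/
def gapCond {m : ℕ} (v : Fin m → ℝ) (K : ℕ) (c : ℝ) : Prop :=
  ∃ (_h1 : 1 ≤ K) (_h2 : K + 1 ≤ m),
    c ≤ ordStat v ⟨m - K, by omega⟩ - ordStat v ⟨m - K - 1, by omega⟩

open Finset Topology

section OrderStatistics

variable {m : ℕ} (v : Fin m → ℝ)

lemma card_filter_ordStat (p : ℝ → Prop) [DecidablePred p] :
    #{j | p (ordStat v j)} = #{j | p (v j)} :=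
  card_equiv (Tuple.sort v) fun j => by simp only [mem_filter, mem_univ, true_and]; rfl

lemma sub_le_card_lt_of_lt_ordStat {i : Fin m} {u : ℝ} (h : u < ordStat v i) :
    m - i ≤ #{j | u < v j} := by
  rw [← Fin.card_Ici, ← card_filter_ordStat v (u < ·)]
  exact card_le_card fun j hj =>
    mem_filter.2 ⟨mem_univ j, h.trans_le (Tuple.monotone_sort v (mem_Ici.1 hj))⟩

lemma succ_le_card_lt_of_ordStat_lt {i : Fin m} {l : ℝ} (h : ordStat v i < l) :
    i + 1 ≤ #{j | v j < l} := by
  rw [← Fin.card_Iic, ← card_filter_ordStat v (· < l)]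
  exact card_le_card fun j hj =>
    mem_filter.2 ⟨mem_univ j, (Tuple.monotone_sort v (mem_Iic.1 hj)).trans_lt h⟩

lemma gapCond.log_sub_one {K : ℕ} {a : ℝ} (ha₀ : 0 < a) (ha₁ : a ≤ 1)
    (h : gapCond v K (Real.log (K * (m - K) / a))) : gapCond v K (Real.log (m - 1)) := by
  obtain ⟨hK₁, hKm, hgap⟩ := h
  refine ⟨hK₁, hKm, le_trans (Real.log_le_log ?_ ?_) hgap⟩
  · have : (2 : ℝ) ≤ m := by exact_mod_cast (by omega : 2 ≤ m)
    linarith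
  · have hK : (1 : ℝ) ≤ K := by exact_mod_cast hK₁
    have hKm' : (K : ℝ) + 1 ≤ m := by exact_mod_cast hKm
    rw [le_div_iff₀ ha₀]
    -- `K (m - K) - (m - 1) = (K - 1) (m - K - 1) ≥ 0`
    nlinarith

lemma gapCond.le_card_or_le_card {K : ℕ} {c u l : ℝ} (h : gapCond v K c) (hc : u - l < c) :
    K ≤ #{j | u < v j} ∨ m - K ≤ #{j | v j < l} := by
  obtain ⟨hK₁, hKm, hgap⟩ := h
  by_cases hu : u < ordStat v ⟨m - K, by omega⟩
  · have := sub_le_card_lt_of_lt_ordStat v hu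
    exact Or.inl (by simpa [Nat.sub_sub_self (by omega : K ≤ m)] using this)
  · have := succ_le_card_lt_of_ordStat_lt v (show ordStat v ⟨m - K - 1, by omega⟩ < l by linarith)
    exact Or.inr (by simp only at this; omega)

end OrderStatistics

section IID

variable {Ω E : Type*} [MeasurableSpace Ω] [MeasurableSpace E] {μ : Measure Ω}

lemma tendsto_measure_const_lt_atTop [IsFiniteMeasure μ] {X : Ω → ℝ} (hX : Measurable X) :
    Tendsto (fun u : ℝ => μ {ω | u < X ω}) atTop (𝓝 0) := by
  have hempty : (⋂ u : ℝ, {ω | u < X ω}) = ∅ :=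
    Set.iInter_eq_empty_iff.2 fun ω => ⟨X ω, (lt_irrefl (X ω) ·)⟩
  simpa [hempty, Function.comp_def] using tendsto_measure_iInter_atTop
    (fun u => (measurableSet_lt measurable_const hX).nullMeasurableSet)
    (fun a b hab ω (h : b < X ω) => (hab.trans_lt h : a < X ω)) ⟨0, measure_ne_top μ _⟩

lemma tendsto_measure_lt_const_atBot [IsFiniteMeasure μ] {X : Ω → ℝ} (hX : Measurable X) :
    Tendsto (fun l : ℝ => μ {ω | X ω < l}) atBot (𝓝 0) := by
  convert (tendsto_measure_const_lt_atTop (μ := μ) hX.neg).comp tendsto_neg_atBot_atTop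
    using 2 with l
  simp [neg_lt_neg_iff]

variable {Z : ℕ → Ω → E} (hZ : ∀ j, Measurable (Z j))
include hZ

lemma measurable_card_filter_mem (m : ℕ) {s : Set E} [DecidablePred (· ∈ s)]
    (hs : MeasurableSet s) :
    Measurable fun ω => #{j : Fin m | Z j ω ∈ s} := by
  simp_rw [card_filter]
  exact Finset.measurable_sum _ fun j _ =>
    Measurable.ite (hZ j hs) measurable_const measurable_const

variable (hindep : iIndepFun Z μ) (hident : ∀ j, IdentDistrib (Z j) (Z 0) μ μ)
include hindep hident

lemma ae_tendsto_card_filter_mem_div [IsFiniteMeasure μ] {s : Set E} [DecidablePred (· ∈ s)]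
    (hs : MeasurableSet s) :
    ∀ᵐ ω ∂μ, Tendsto (fun m : ℕ => (#{j : Fin m | Z j ω ∈ s} : ℝ) / m) atTop
      (𝓝 (μ (Z 0 ⁻¹' s)).toReal) := by
  set g : E → ℝ := s.indicator 1
  have hg : Measurable g := measurable_one.indicator hs
  set X : ℕ → Ω → ℝ := fun j => g ∘ Z j
  have hint : Integrable (X 0) μ := (integrable_const 1).indicator (hZ 0 hs)
  have hslln := strong_law_ae_real X hint
    (fun i j hij => (hindep.indepFun hij).comp hg hg) (fun j => (hident j).comp hg)
  have hmean : ∫ ω, X 0 ω ∂μ = (μ (Z 0 ⁻¹' s)).toReal := by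
    rw [← measureReal_def, ← integral_indicator_one (hZ 0 hs)]
    rfl
  rw [hmean] at hslln
  filter_upwards [hslln] with ω hω
  convert hω using 2 with m
  rw [natCast_card_filter, ← Fin.sum_univ_eq_sum_range (fun j => X j ω)]
  simp [X, g, Set.indicator_apply]

lemma tendsto_measure_card_le_card [IsFiniteMeasure μ] {A T : Set E} [DecidablePred (· ∈ A)]
    [DecidablePred (· ∈ T)] (hA : MeasurableSet A) (hT : MeasurableSet T)
    (hAT : μ (Z 0 ⁻¹' A) < μ (Z 0 ⁻¹' T)) :
    Tendsto (fun m : ℕ => μ {ω | #{j : Fin m | Z j ω ∈ T} ≤ #{j : Fin m | Z j ω ∈ A}})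
      atTop (𝓝 0) := by
  have hmeas : ∀ m : ℕ, MeasurableSet
      {ω | #{j : Fin m | Z j ω ∈ T} ≤ #{j : Fin m | Z j ω ∈ A}} := fun m =>
    measurableSet_le (measurable_card_filter_mem hZ m hT) (measurable_card_filter_mem hZ m hA)
  have hlim : ∀ᵐ ω ∂μ, ∀ᶠ m in atTop,
      ω ∈ {ω | #{j : Fin m | Z j ω ∈ T} ≤ #{j : Fin m | Z j ω ∈ A}} ↔ ω ∈ (∅ : Set Ω) := by
    filter_upwards [ae_tendsto_card_filter_mem_div hZ hindep hident hA,
      ae_tendsto_card_filter_mem_div hZ hindep hident hT] with ω hAω hTω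
    filter_upwards [hAω.eventually_lt hTω ((ENNReal.toReal_lt_toReal (measure_ne_top μ _)
      (measure_ne_top μ _)).2 hAT), eventually_gt_atTop 0] with m hm hm₀
    rw [div_lt_div_iff_of_pos_right (by exact_mod_cast hm₀)] at hm
    simpa using (by exact_mod_cast hm : #{j : Fin m | Z j ω ∈ A} < #{j : Fin m | Z j ω ∈ T})
  simpa using tendsto_measure_of_ae_tendsto_indicator_of_isFiniteMeasure atTop
    MeasurableSet.empty hmeas hlim

theorem tendsto_measure_gapCond [IsFiniteMeasure μ] {X : E → ℝ} (hX : Measurable X)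
    {T : Set E} [DecidablePred (· ∈ T)] (hT : MeasurableSet T) (hT₀ : μ (Z 0 ⁻¹' T) ≠ 0)
    (hT₁ : μ (Z 0 ⁻¹' Tᶜ) ≠ 0) {a : ℝ} (ha₀ : 0 < a) (ha₁ : a ≤ 1) :
    Tendsto (fun m : ℕ => μ {ω | gapCond (fun j : Fin m => X (Z j ω)) #{j : Fin m | Z j ω ∈ T}
      (Real.log (#{j : Fin m | Z j ω ∈ T} * (m - #{j : Fin m | Z j ω ∈ T}) / a))})
      atTop (𝓝 0) := by
  obtain ⟨u, hu⟩ := ((tendsto_measure_const_lt_atTop (μ := μ) (hX.comp (hZ 0))).eventually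
    (gt_mem_nhds (pos_iff_ne_zero.2 hT₀))).exists
  obtain ⟨l, hl⟩ := ((tendsto_measure_lt_const_atBot (μ := μ) (hX.comp (hZ 0))).eventually
    (gt_mem_nhds (pos_iff_ne_zero.2 hT₁))).exists
  have hupper := tendsto_measure_card_le_card hZ hindep hident
    (measurableSet_lt measurable_const hX) hT hu
  have hlower := tendsto_measure_card_le_card hZ hindep hident
    (measurableSet_lt hX measurable_const) hT.compl hl
  have hlog : ∀ᶠ m : ℕ in atTop, u - l < Real.log (m - 1) :=
    (Real.tendsto_log_atTop.comp (tendsto_atTop_add_const_right _ (-1)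
      tendsto_natCast_atTop_atTop)).eventually_gt_atTop _
  refine tendsto_of_tendsto_of_tendsto_of_le_of_le' tendsto_const_nhds
    (by simpa using hupper.add hlower) (Eventually.of_forall fun m => zero_le) ?_
  filter_upwards [hlog] with m hm
  refine (measure_mono fun ω hω => ?_).trans (measure_union_le _ _)
  have hcompl := card_filter_add_card_filter_not (s := univ) fun j : Fin m => Z j ω ∈ T
  rw [card_univ, Fintype.card_fin] at hcompl
  rcases ((hω : gapCond _ _ _).log_sub_one _ ha₀ ha₁).le_card_or_le_card _ hm with h | h
  · exact Or.inl h
  · refine Or.inr (le_trans (le_of_eq ?_) h)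
    omega

end IID

theorem stmt_15_general {Ω : Type*} [MeasurableSpace Ω] {μ : Measure Ω} [IsProbabilityMeasure μ]
    (π0 : ℝ) (hπ0 : π0 ∈ Set.Ioo (0:ℝ) 1)
    (α β : ℝ) (hα : α ∈ Set.Ioo (0:ℝ) 1) (hβ : β ∈ Set.Ioo (0:ℝ) 1)
    -- true states and log-likelihood ratio statistics, i.i.d. across streams j
    (θ : ℕ → Ω → ℕ) (Λ : ℕ → ℕ → Ω → ℝ)
    (hθmeas : ∀ j, Measurable (θ j)) (hΛmeas : ∀ n j, Measurable (Λ n j))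
    (hθ01 : ∀ j ω, θ j ω = 0 ∨ θ j ω = 1)
    (hindep : iIndepFun
      (fun j ω => (θ j ω, fun n => Λ n j ω)) μ)
    (hident : ∀ j, IdentDistrib (fun ω => (θ j ω, fun n => Λ n j ω))
      (fun ω => (θ 0 ω, fun n => Λ n 0 ω)) μ μ)
    (hbern : μ {ω | θ 0 ω = 1} = ENNReal.ofReal (1 - π0)) :
    ∀ L : ℕ, Tendsto (fun m =>
      μ {ω | ∃ n ≤ L, gapCond (fun j : Fin m => Λ n (j : ℕ) ω) (∑ j : Fin m, θ (j : ℕ) ω)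
          (Real.log (((∑ j : Fin m, θ (j : ℕ) ω : ℕ) : ℝ)
            * ((m : ℝ) - ((∑ j : Fin m, θ (j : ℕ) ω : ℕ) : ℝ)) / min α β))})
      atTop (nhds 0) := by
  classical
  intro L
  set Z : ℕ → Ω → ℕ × (ℕ → ℝ) := fun j ω => (θ j ω, fun n => Λ n j ω)
  set T : Set (ℕ × (ℕ → ℝ)) := {e | e.1 = 1}
  have hZ : ∀ j, Measurable (Z j) :=
    fun j => (hθmeas j).prodMk (measurable_pi_lambda _ fun n => hΛmeas n j)
  have hT : MeasurableSet T := measurable_fst (measurableSet_singleton 1)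
  have hK : ∀ m ω, ∑ j : Fin m, θ j ω = #{j : Fin m | Z j ω ∈ T} := fun m ω => by
    rw [card_filter]
    exact sum_congr rfl fun j _ => by rcases hθ01 j ω with h | h <;> simp [Z, T, h]
  have hT₀ : μ (Z 0 ⁻¹' T) ≠ 0 := by
    simpa [Z, T, hbern] using hπ0.2
  have hT₁ : μ (Z 0 ⁻¹' Tᶜ) ≠ 0 := by
    rw [Set.preimage_compl, measure_compl (hZ 0 hT) (measure_ne_top _ _), measure_univ]
    exact (tsub_pos_of_lt (hbern ▸ ENNReal.ofReal_lt_one.2 (by linarith [hπ0.1]))).ne'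
  have hstage : ∀ n, Tendsto (fun m : ℕ => μ {ω | gapCond (fun j : Fin m => Λ n j ω)
      (∑ j : Fin m, θ j ω) (Real.log ((∑ j : Fin m, θ j ω : ℕ) * (m - (∑ j : Fin m, θ j ω : ℕ))
        / min α β))}) atTop (𝓝 0) := fun n => by
    simp only [hK]
    exact tendsto_measure_gapCond hZ hindep hident
      (X := fun e => e.2 n) (by fun_prop) hT hT₀ hT₁
      (lt_min hα.1 hβ.1) ((min_le_left _ _).trans hα.2.le)
  have hsum := tendsto_finsetSum (range (L + 1)) fun n _ => hstage n
  rw [sum_const_zero] at hsum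
  refine tendsto_of_tendsto_of_tendsto_of_le_of_le tendsto_const_nhds hsum
    (fun _ => zero_le) fun m => ?_
  refine (measure_mono fun ω hω => ?_).trans (measure_biUnion_finset_le _ _)
  obtain ⟨n, hn, hgap⟩ := hω
  exact Set.mem_biUnion (mem_range.2 (Nat.lt_succ_of_le hn)) hgap

/-- **Lemma 4.** The stopping time of the asymptotically optimal Gap rule diverges weakly as
the number of hypotheses `m → ∞`: for every `L`, `P(T_g* ≤ L) → 0`. -/
theorem stmt_15 {Ω : Type*} [MeasurableSpace Ω] {μ : Measure Ω} [IsProbabilityMeasure μ]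
    (π0 : ℝ) (hπ0 : π0 ∈ Set.Ioo (0:ℝ) 1)
    (α β : ℝ) (hα : α ∈ Set.Ioo (0:ℝ) 1) (hβ : β ∈ Set.Ioo (0:ℝ) 1)
    -- true states and log-likelihood ratio statistics, i.i.d. across streams j
    (θ : ℕ → Ω → ℕ) (Λ : ℕ → ℕ → Ω → ℝ)
    (hθmeas : ∀ j, Measurable (θ j)) (hΛmeas : ∀ n j, Measurable (Λ n j))
    (hθ01 : ∀ j ω, θ j ω = 0 ∨ θ j ω = 1)
    (hindep : iIndepFun
      (fun j ω => (θ j ω, fun n => Λ n j ω)) μ)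
    (hident : ∀ j, IdentDistrib (fun ω => (θ j ω, fun n => Λ n j ω))
      (fun ω => (θ 0 ω, fun n => Λ n 0 ω)) μ μ)
    (hbern : μ {ω | θ 0 ω = 1} = ENNReal.ofReal (1 - π0))
    -- the common cdf H_n of the log-likelihood ratios at stage n
    (H : ℕ → ℝ → ℝ) (hH : ∀ n x, (μ {ω | Λ n 0 ω ≤ x}).toReal = H n x)
    -- H_n is continuous and strictly increasing near its quantile of order 1 − π1 = π0
    (hreg : ∀ n, ∃ δ > (0:ℝ),
      ContinuousOn (H n) (Set.Ioo (sInf {x : ℝ | π0 ≤ H n x} - δ)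
          (sInf {x : ℝ | π0 ≤ H n x} + δ)) ∧
      StrictMonoOn (H n) (Set.Ioo (sInf {x : ℝ | π0 ≤ H n x} - δ)
          (sInf {x : ℝ | π0 ≤ H n x} + δ))) :
    ∀ L : ℕ, Tendsto (fun m =>
      μ {ω | ∃ n ≤ L, gapCond (fun j : Fin m => Λ n (j : ℕ) ω) (∑ j : Fin m, θ (j : ℕ) ω)
          (Real.log (((∑ j : Fin m, θ (j : ℕ) ω : ℕ) : ℝ)
            * ((m : ℝ) - ((∑ j : Fin m, θ (j : ℕ) ω : ℕ) : ℝ)) / min α β))})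
      atTop (nhds 0) :=
  stmt_15_general π0 hπ0 α β hα hβ θ Λ hθmeas hΛmeas hθ01 hindep hident hbern
end
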